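/- arXiv:math/0601328 — 3 statements merged into one kernel-verified Lean document; each statement's English description precedes it below -/
import Mathlib

section
/- Let M be a left divisibility monoid and h : M → H the map sending each element to its maximal right-dividing hypercube. Then h(ab) = h(h(a)b) for all a, b in M. -/
section Defs
variable {M : Type*} [Monoid M]

/-- `a` left-divides `b` (`b` is a right multiple of `a`). -/
def LDvd (a b : M) : Prop := ∃ d, b = a * d

/-- `a` right-divides `b` (`b` is a left multiple of `a`). -/
def RDvd (a b : M) : Prop := ∃ d, b = d * a

/-- `a` is an irreducible element of the monoid. -/
def IsIrred (a : M) : Prop := a ≠ 1 ∧ ∀ b c, a = b * c → b = 1 ∨ c = 1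

/-- `c` is a right lcm of `a` and `b`. -/
def IsRightLcm (a b c : M) : Prop :=
  LDvd a c ∧ LDvd b c ∧ ∀ m, LDvd a m → LDvd b m → LDvd c m

/-- `c` is a right lcm of the set `s`. -/
def IsRightLcmSet (s : Set M) (c : M) : Prop :=
  (∀ x ∈ s, LDvd x c) ∧ ∀ m, (∀ x ∈ s, LDvd x m) → LDvd c m

/-- A hypercube: a right lcm of a finite set of irreducible elements. -/
def IsHypercube (h : M) : Prop :=
  ∃ s : Finset M, (∀ x ∈ s, IsIrred x) ∧ IsRightLcmSet (↑s) h

/-- `h` is the maximal hypercube right-dividing `a`. -/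
def IsMaxHC (a h : M) : Prop :=
  IsHypercube h ∧ RDvd h a ∧ ∀ k, IsHypercube k → RDvd k a → RDvd k h

/-- The list `L = [h_p, …, h_1]` of nontrivial hypercubes is a right normal form:
`h_i` is the maximal hypercube right-dividing `h_p ⋯ h_i`. -/
def IsRNF (hmap : M → M) (L : List M) : Prop :=
  (∀ x ∈ L, IsHypercube x ∧ x ≠ 1) ∧
  ∀ n (hn : n < L.length), hmap ((L.take (n + 1)).prod) = L.get ⟨n, hn⟩

end Defs

/-- A left divisibility monoid: cancellative, generated by its finitely many
irreducibles, any two elements have a left gcd, and every set of left divisors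
is a finite distributive lattice under left divisibility. -/
def IsLDM (M : Type*) [Monoid M] : Prop :=
  (∀ a b c : M, a * b = a * c → b = c) ∧
  (∀ a b c : M, b * a = c * a → b = c) ∧
  (∃ S : Finset M, (∀ x ∈ S, IsIrred x) ∧ Submonoid.closure (S : Set M) = ⊤) ∧
  (∀ a b : M, ∃ g, LDvd g a ∧ LDvd g b ∧ ∀ c, LDvd c a → LDvd c b → LDvd c g) ∧
  (∀ a : M, {b : M | LDvd b a}.Finite) ∧
  (∀ a : M, ∃ i : DistribLattice {b : M // LDvd b a},
      ∀ x y : {b : M // LDvd b a}, i.le x y ↔ LDvd x.1 y.1)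

/-!
Let `k` be a hypercube right-dividing `a * b`, say `a * b = w * k`, and write `w₀ = gcd(w, a)`,
`a = w₀ * k₀`, `w = w₀ * s`. In the finite distributive lattice of left divisors of `a * b`, that
`k` is a hypercube says that `a * b` is the join of the covers of `w` below it. By distributivity,
meeting with `a` turns this into: `a` is the join of the covers of `a ⊓ w = w₀` below it, i.e. `k₀`
is a hypercube. So `k₀` right-divides `h(a)`, and cancelling `w₀` in `w₀ * k₀ * b = w₀ * s * k`
shows that `k` right-divides `k₀ * b`, hence `h(a) * b`. For `k = h(a * b)`, maximality of
`h(h(a) * b)` gives one divisibility; the other holds because `h(a) * b` right-divides `a * b`.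
-/

section JoinOfCovers

variable {α : Type*}

/-- In the lattice of left divisors of `N`, `IsJoinOfCovers u (u * k)` says that `k` is a
hypercube: the covers of `u` are the products `u * y` with `y` irreducible. -/
def IsJoinOfCovers [Preorder α] (b t : α) : Prop :=
  ∀ g, b ≤ g → (∀ m, b ⋖ m → m ≤ t → m ≤ g) → t ≤ g

theorem IsJoinOfCovers.inf_left [DistribLattice α] [OrderBot α] [Finite α] {a b t : α}
    (h : IsJoinOfCovers b t) (hat : a ≤ t) : IsJoinOfCovers (a ⊓ b) a := by
  classical
  intro g hg hcov
  -- `e` absorbs the covers of `b` that meeting with `a` collapses back to `a ⊓ b`.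
  let S : Finset α := (Set.toFinite {m | b ⋖ m ∧ a ⊓ m ≤ b}).toFinset
  let e := b ⊔ S.sup id
  have hae : a ⊓ e ≤ g := by
    rw [inf_sup_left, Finset.sup_inf_distrib_left]
    refine sup_le hg (Finset.sup_le fun m hm => ?_)
    exact (le_inf inf_le_left ((Set.Finite.mem_toFinset _).1 hm).2).trans hg
  have hte : t ≤ g ⊔ e := by
    refine h _ (le_sup_of_le_right le_sup_left) fun m hbm _ => ?_
    rcases hbm.eq_or_eq le_sup_left (sup_le hbm.le inf_le_right) with hb | hm
    · have hmem : m ∈ S := (Set.Finite.mem_toFinset _).2 ⟨hbm, hb ▸ le_sup_right⟩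
      exact le_sup_of_le_right (le_sup_of_le_right (Finset.le_sup (f := id) hmem))
    · have hcov_inf : a ⊓ b ⋖ a ⊓ m := by
        have := inf_covBy_of_covBy_sup_left (hm.symm ▸ hbm)
        rwa [inf_left_comm, inf_eq_left.2 hbm.le] at this
      rw [← hm]
      exact sup_le (le_sup_of_le_right le_sup_left)
        ((hcov _ hcov_inf inf_le_left).trans le_sup_left)
  calc a ≤ a ⊓ (g ⊔ e) := le_inf le_rfl (hat.trans hte)
    _ = a ⊓ g ⊔ a ⊓ e := inf_sup_left _ _ _
    _ ≤ g := sup_le inf_le_right hae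

end JoinOfCovers

section RightDivisibility

variable {M : Type*} [Monoid M]

theorem RDvd.trans {a b c : M} : RDvd a b → RDvd b c → RDvd a c := by
  rintro ⟨d, rfl⟩ ⟨e, rfl⟩
  exact ⟨e * d, (mul_assoc _ _ _).symm⟩

theorem RDvd.mul_right {a b : M} (h : RDvd a b) (c : M) : RDvd (a * c) (b * c) := by
  obtain ⟨d, rfl⟩ := h
  exact ⟨d, mul_assoc _ _ _⟩

end RightDivisibility

namespace IsLDM

variable {M : Type*} [Monoid M]

theorem mul_left_cancel (hM : IsLDM M) {a b c : M} (h : a * b = a * c) : b = c :=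
  hM.1 a b c h

theorem mul_right_cancel (hM : IsLDM M) {a b c : M} (h : b * a = c * a) : b = c :=
  hM.2.1 a b c h

theorem dvd_of_mul_dvd_mul_left (hM : IsLDM M) {a b c : M} (h : a * b ∣ a * c) : b ∣ c := by
  obtain ⟨d, hd⟩ := h
  exact ⟨d, hM.mul_left_cancel (by rw [hd, mul_assoc])⟩

/-- Indexed by `hM` so that the lattice structure provided by `hM` can be an instance. -/
def LeftDivisors (_hM : IsLDM M) (N : M) : Type _ := {b : M // LDvd b N}

noncomputable instance (hM : IsLDM M) (N : M) : DistribLattice (hM.LeftDivisors N) :=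
  (hM.2.2.2.2.2 N).choose

namespace LeftDivisors

variable {hM : IsLDM M} {N : M}

theorem le_iff {u v : hM.LeftDivisors N} : u ≤ v ↔ u.1 ∣ v.1 :=
  (hM.2.2.2.2.2 N).choose_spec u v

noncomputable instance : OrderBot (hM.LeftDivisors N) where
  bot := ⟨1, one_dvd N⟩
  bot_le u := le_iff.2 (one_dvd u.1)

instance : Finite (hM.LeftDivisors N) := (hM.2.2.2.2.1 N).to_subtype

theorem covBy_iff {u v : hM.LeftDivisors N} : u ⋖ v ↔ ∃ y, IsIrred y ∧ v.1 = u.1 * y := by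
  constructor
  · intro huv
    obtain ⟨y, hy⟩ := le_iff.1 huv.le
    refine ⟨y, ⟨?_, fun p q hpq => ?_⟩, hy⟩
    · rintro rfl
      exact huv.ne (Subtype.ext (by rw [hy, mul_one]))
    · subst hpq
      have hup : u.1 * p ∣ N := (mul_dvd_mul_left _ (dvd_mul_right p q)).trans (hy ▸ v.2)
      rcases huv.eq_or_eq (le_iff.2 (dvd_mul_right u.1 p) : u ≤ ⟨u.1 * p, hup⟩)
          (le_iff.2 ⟨q, by rw [hy, mul_assoc]⟩) with hp | hq
      · exact Or.inl (hM.mul_left_cancel ((congrArg Subtype.val hp).trans (mul_one _).symm))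
      · refine Or.inr (hM.mul_left_cancel (a := u.1 * p) ?_)
        rw [mul_one, mul_assoc, ← hy]
        exact (congrArg Subtype.val hq).symm
  · rintro ⟨y, hy, hv⟩
    refine covBy_iff_lt_and_eq_or_eq.2 ⟨lt_of_le_of_ne (le_iff.2 ⟨y, hv⟩) fun huv => ?_,
      fun z huz hzv => ?_⟩
    · exact hy.1 (hM.mul_left_cancel (a := u.1) (by rw [← hv, ← huv, mul_one])).symm
    obtain ⟨p, hp⟩ := le_iff.1 huz
    obtain ⟨q, hq⟩ := le_iff.1 hzv
    have hpq : y = p * q := hM.mul_left_cancel (by rw [← hv, hq, hp, mul_assoc])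
    rcases hy.2 p q hpq with rfl | rfl
    · exact Or.inl (Subtype.ext (by rw [hp, mul_one]))
    · exact Or.inr (Subtype.ext (by rw [hq, mul_one]))

end LeftDivisors

open LeftDivisors

theorem dvd_antisymm (hM : IsLDM M) {a b : M} (hab : a ∣ b) (hba : b ∣ a) : a = b := by
  let A : hM.LeftDivisors b := ⟨a, hab⟩
  let B : hM.LeftDivisors b := ⟨b, dvd_rfl⟩
  have hAB : A = B := le_antisymm (le_iff.2 hab) (le_iff.2 hba)
  exact congrArg Subtype.val hAB

theorem rdvd_antisymm (hM : IsLDM M) {a b : M} (hab : RDvd a b) (hba : RDvd b a) : a = b := by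
  obtain ⟨d, rfl⟩ := hab
  obtain ⟨e, he⟩ := hba
  have hed : e * d = 1 := hM.mul_right_cancel (by rw [mul_assoc, ← he, one_mul])
  rw [hM.dvd_antisymm ⟨d, hed.symm⟩ (one_dvd e), one_mul] at he
  exact he

theorem isHypercube_of_forall_irred_dvd (hM : IsLDM M) {d : M}
    (H : ∀ g, g ∣ d → (∀ y, IsIrred y → y ∣ d → y ∣ g) → d ∣ g) : IsHypercube d := by
  have hfin : {y : M | IsIrred y ∧ y ∣ d}.Finite := (hM.2.2.2.2.1 d).subset fun y hy => hy.2
  refine ⟨hfin.toFinset, fun y hy => (hfin.mem_toFinset.1 hy).1,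
    fun y hy => (hfin.mem_toFinset.1 hy).2, fun m hm => ?_⟩
  obtain ⟨g, hgm, hgd, hg⟩ := hM.2.2.2.1 m d
  exact (H g hgd fun y hy hyd => hg y (hm y (hfin.mem_toFinset.2 ⟨hy, hyd⟩)) hyd).trans hgm

theorem _root_.IsHypercube.isJoinOfCovers {hM : IsLDM M} {N k : M} (hk : IsHypercube k)
    {u v : hM.LeftDivisors N} (huv : v.1 = u.1 * k) : IsJoinOfCovers u v := by
  obtain ⟨T, hT, hTk, hkT⟩ := hk
  intro g hug hcov
  obtain ⟨g', hg'⟩ := le_iff.1 hug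
  have hkg' : k ∣ g' := hkT g' fun y hy => by
    have hyk : u.1 * y ∣ v.1 := huv ▸ mul_dvd_mul_left _ (hTk y hy)
    have hm := hcov ⟨u.1 * y, hyk.trans v.2⟩ (covBy_iff.2 ⟨y, hT y hy, rfl⟩) (le_iff.2 hyk)
    exact hM.dvd_of_mul_dvd_mul_left (hg' ▸ le_iff.1 hm)
  exact le_iff.2 (huv ▸ hg' ▸ mul_dvd_mul_left _ hkg')

theorem isHypercube_of_isJoinOfCovers (hM : IsLDM M) {N k : M} {u v : hM.LeftDivisors N}
    (h : IsJoinOfCovers u v) (huv : v.1 = u.1 * k) : IsHypercube k := by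
  refine hM.isHypercube_of_forall_irred_dvd fun g hgk hirr =>
    hM.dvd_of_mul_dvd_mul_left (a := u.1) ?_
  have hug : u.1 * g ∣ N := (mul_dvd_mul_left _ hgk).trans (huv ▸ v.2)
  refine huv ▸ le_iff.1 (h ⟨u.1 * g, hug⟩ (le_iff.2 (dvd_mul_right _ _)) fun m hum hmv => ?_)
  obtain ⟨y, hy, hm⟩ := covBy_iff.1 hum
  have hyk : y ∣ k := hM.dvd_of_mul_dvd_mul_left (hm ▸ huv ▸ le_iff.1 hmv)
  exact le_iff.2 (hm ▸ mul_dvd_mul_left _ (hirr y hy hyk))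

theorem rdvd_mul_of_isHypercube (hM : IsLDM M) {k c b h : M} (hk : IsHypercube k)
    (hkcb : RDvd k (c * b)) (hc : IsMaxHC c h) : RDvd k (h * b) := by
  obtain ⟨w, hw⟩ := hkcb
  let C : hM.LeftDivisors (c * b) := ⟨c, dvd_mul_right c b⟩
  let W : hM.LeftDivisors (c * b) := ⟨w, ⟨k, hw⟩⟩
  let T : hM.LeftDivisors (c * b) := ⟨c * b, dvd_rfl⟩
  have hCW : IsJoinOfCovers (C ⊓ W) C :=
    (hk.isJoinOfCovers (u := W) (v := T) hw).inf_left (le_iff.2 (dvd_mul_right c b))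
  obtain ⟨k₀, hck₀⟩ := le_iff.1 (inf_le_left : C ⊓ W ≤ C)
  obtain ⟨s, hws⟩ := le_iff.1 (inf_le_right : C ⊓ W ≤ W)
  have hk₀ : IsHypercube k₀ := hM.isHypercube_of_isJoinOfCovers hCW hck₀
  have hk₀b : k₀ * b = s * k :=
    hM.mul_left_cancel (by rw [← mul_assoc, ← mul_assoc, ← hck₀, ← hws]; exact hw)
  obtain ⟨e, he⟩ := hc.2.2 k₀ hk₀ ⟨_, hck₀⟩
  exact ⟨e * s, by rw [he, mul_assoc, hk₀b, mul_assoc]⟩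

end IsLDM

/-- Lemma 20: h(ab) = h(h(a)b). -/
theorem stmt_7 {M : Type*} [Monoid M] (hM : IsLDM M)
    (hmap : M → M) (hspec : ∀ a : M, IsMaxHC a (hmap a)) :
    ∀ a b : M, hmap (a * b) = hmap (hmap a * b) := by
  intro a b
  obtain ⟨hab, hab_dvd, hab_max⟩ := hspec (a * b)
  obtain ⟨hhab, hhab_dvd, hhab_max⟩ := hspec (hmap a * b)
  apply hM.rdvd_antisymm
  · exact hhab_max _ hab (hM.rdvd_mul_of_isHypercube hab hab_dvd (hspec a))
  · exact hab_max _ hhab (hhab_dvd.trans ((hspec a).2.1.mul_right b))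
end

section
/- In a left divisibility monoid, every left divisor of a hypercube is a hypercube, and every right divisor of a hypercube is a hypercube. -/
section Aux
variable {M : Type*} [Monoid M]

/-- The type of left divisors of `h`. -/
abbrev SubT (M : Type*) [Monoid M] (h : M) := {b : M // LDvd b h}

theorem ldvd_one_all (a : M) : LDvd 1 a := ⟨a, (one_mul a).symm⟩
theorem ldvd_refl' (a : M) : LDvd a a := ⟨1, (mul_one a).symm⟩
theorem ldvd_trans' {a b c : M} : LDvd a b → LDvd b c → LDvd a c
  | ⟨u, hu⟩, ⟨v, hv⟩ => ⟨u * v, by rw [hv, hu, mul_assoc]⟩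

end Aux

/-- Every left divisor and every right divisor of a hypercube is a hypercube. -/
theorem stmt_9 {M : Type*} [Monoid M] (hM : IsLDM M)
    {h : M} (hh : IsHypercube h) :
    (∀ d : M, LDvd d h → IsHypercube d) ∧ (∀ d : M, RDvd d h → IsHypercube d) := by
  classical
  obtain ⟨cancL, cancR, hgen, hgcd, hfin, hlat⟩ := hM
  obtain ⟨s, hsirr, hslcm⟩ := hh
  obtain ⟨iL, hle⟩ := hlat h
  letI : DistribLattice (SubT M h) := iL
  haveI : Fintype (SubT M h) := (hfin h).fintype
  letI : OrderBot (SubT M h) :=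
    { bot := ⟨1, ldvd_one_all h⟩
      bot_le := fun x => (hle _ x).mpr (ldvd_one_all x.1) }
  have hle' : ∀ x y : SubT M h, x ≤ y ↔ LDvd x.1 y.1 := hle
  have hsdvd : ∀ a ∈ s, LDvd a h := fun a ha => hslcm.1 a (Finset.mem_coe.mpr ha)
  set s' : Finset (SubT M h) := Finset.univ.filter (fun x => x.1 ∈ s) with hs'
  -- the top is the sup of the atoms
  have htop : (s'.sup id : SubT M h) = ⟨h, ldvd_refl' h⟩ := by
    apply le_antisymm
    · exact (hle' _ _).mpr (s'.sup id).2
    · refine (hle' _ _).mpr (hslcm.2 _ ?_)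
      intro a ha
      have ha' : a ∈ s := Finset.mem_coe.mp ha
      have hmem : (⟨a, hsdvd a ha'⟩ : SubT M h) ∈ s' := by simp [hs', ha']
      exact (hle' _ _).mp (Finset.le_sup (f := id) hmem)
  -- elements of s are atoms
  have hatom : ∀ a : SubT M h, a.1 ∈ s → ∀ x : SubT M h, x ≤ a → x = ⊥ ∨ x = a := by
    intro a ha x hx
    obtain ⟨e, he⟩ := (hle' _ _).mp hx
    rcases (hsirr a.1 (Finset.mem_coe.mpr ha)).2 x.1 e he with h1 | h1
    · exact Or.inl (Subtype.ext h1)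
    · exact Or.inr (Subtype.ext (by rw [he, h1, mul_one]))
  have hane : ∀ a : SubT M h, a.1 ∈ s → a ≠ (⊥ : SubT M h) := by
    intro a ha hcon
    exact (hsirr a.1 (Finset.mem_coe.mpr ha)).1 (congrArg Subtype.val hcon)
  -- decomposition of any element as a sup of atoms below it
  have hdecomp : ∀ x : SubT M h, x = s'.sup (fun a => x ⊓ a) := by
    intro x
    have h1 : x = x ⊓ s'.sup id := by
      rw [htop]
      exact (inf_eq_left.mpr ((hle' _ _).mpr x.2)).symm
    conv_lhs => rw [h1]
    exact Finset.sup_inf_distrib_left s' id x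
  constructor
  · -- left divisors
    intro d hd
    refine ⟨s.filter (fun a => LDvd a d), ?_, ?_, ?_⟩
    · intro x hx
      exact hsirr x (Finset.mem_coe.mpr (Finset.filter_subset _ _ (Finset.mem_coe.mp hx)))
    · intro x hx
      exact (Finset.mem_filter.mp (Finset.mem_coe.mp hx)).2
    · intro m hm
      obtain ⟨g, hgd, hgm, hgmax⟩ := hgcd d m
      have hgh : LDvd g h := ldvd_trans' hgd hd
      have hdg : (⟨d, hd⟩ : SubT M h) ≤ ⟨g, hgh⟩ := by
        have hx := hdecomp ⟨d, hd⟩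
        rw [hx]
        apply Finset.sup_le
        intro a ha
        have ha' : a.1 ∈ s := (Finset.mem_filter.mp ha).2
        rcases hatom a ha' ((⟨d, hd⟩ : SubT M h) ⊓ a) inf_le_right with hbot | heq
        · rw [hbot]; exact bot_le
        · have hale : a ≤ (⟨d, hd⟩ : SubT M h) := heq ▸ inf_le_left
          have hadvd : LDvd a.1 d := (hle' _ _).mp hale
          have ham : LDvd a.1 m := hm a.1
            (Finset.mem_coe.mpr (Finset.mem_filter.mpr ⟨ha', hadvd⟩))
          rw [heq]
          exact (hle' _ _).mpr (hgmax a.1 hadvd ham)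
      exact ldvd_trans' ((hle' _ _).mp hdg) hgm
  · -- right divisors
    intro d hd
    obtain ⟨c, hc⟩ := hd
    refine ⟨(hfin d).toFinset.filter IsIrred, ?_, ?_, ?_⟩
    · intro x hx
      exact (Finset.mem_filter.mp (Finset.mem_coe.mp hx)).2
    · intro x hx
      exact (hfin d).mem_toFinset.mp (Finset.mem_filter.mp (Finset.mem_coe.mp hx)).1
    · intro m hm
      obtain ⟨g, hgd, hgm, hgmax⟩ := hgcd d m
      refine ldvd_trans' ?_ hgm
      have hch : LDvd c h := ⟨d, hc⟩
      have hcgh : LDvd (c * g) h := by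
        obtain ⟨k, hk⟩ := hgd
        exact ⟨k, by rw [hc, hk, mul_assoc]⟩
      set u : SubT M h := ⟨c * g, hcgh⟩ with hu
      have hkey : ∀ a ∈ s', (⟨c, hch⟩ : SubT M h) ⊔ a ≤ u := by
        intro a ha
        have ha' : a.1 ∈ s := (Finset.mem_filter.mp ha).2
        rcases hatom a ha' (a ⊓ (⟨c, hch⟩ : SubT M h)) inf_le_left with hbot | heq
        · -- a ⊓ c = ⊥ : covering case
          set x := (⟨c, hch⟩ : SubT M h) ⊔ a with hxdef
          obtain ⟨e, hex⟩ := (hle' _ _).mp (le_sup_left : (⟨c, hch⟩ : SubT M h) ≤ x)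
          have hed : LDvd e d := by
            obtain ⟨k, hk⟩ := x.2
            exact ⟨k, cancL c d (e * k) (by rw [← hc, hk, hex, mul_assoc])⟩
          have hcov : ∀ y : SubT M h, (⟨c, hch⟩ : SubT M h) ≤ y → y ≤ x → y = ⟨c, hch⟩ ∨ y = x := by
            intro y h1 h2
            have hy : y = (⟨c, hch⟩ : SubT M h) ⊔ (y ⊓ a) := by
              have h3 : y ⊓ x = y := inf_eq_left.mpr h2
              have h4 : y ⊓ (⟨c, hch⟩ : SubT M h) = ⟨c, hch⟩ := inf_eq_right.mpr h1
              calc y = y ⊓ x := h3.symm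
                _ = y ⊓ ((⟨c, hch⟩ : SubT M h) ⊔ a) := rfl
                _ = (y ⊓ (⟨c, hch⟩ : SubT M h)) ⊔ (y ⊓ a) := inf_sup_left y _ a
                _ = (⟨c, hch⟩ : SubT M h) ⊔ (y ⊓ a) := by rw [h4]
            rcases hatom a ha' (y ⊓ a) inf_le_right with hb | he
            · left; rw [hy, hb, sup_bot_eq]
            · right; rw [hy, he]
          have hxne : x ≠ (⟨c, hch⟩ : SubT M h) := by
            intro hcon
            apply hane a ha'
            have h5 : a ≤ (⟨c, hch⟩ : SubT M h) := by
              rw [← hcon]; exact le_sup_right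
            exact (inf_eq_left.mpr h5).symm.trans hbot
          have hene : e ≠ 1 := fun h1 =>
            hxne (Subtype.ext (by rw [hex, h1, mul_one]))
          have heirr : IsIrred e := by
            refine ⟨hene, ?_⟩
            intro f f' hff
            have hcfh : LDvd (c * f) h :=
              ldvd_trans' ⟨f', by rw [mul_assoc, ← hff, ← hex]⟩ x.2
            have h1 : (⟨c, hch⟩ : SubT M h) ≤ ⟨c * f, hcfh⟩ := (hle' _ _).mpr ⟨f, rfl⟩
            have h2 : (⟨c * f, hcfh⟩ : SubT M h) ≤ x :=
              (hle' _ _).mpr ⟨f', by rw [hex, hff, mul_assoc]⟩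
            rcases hcov _ h1 h2 with hy | hy
            · left
              exact cancL c f 1 (by rw [mul_one]; exact congrArg Subtype.val hy)
            · right
              have h6 : c * f = c * (f * f') := by
                calc c * f = x.1 := congrArg Subtype.val hy
                  _ = c * e := hex
                  _ = c * (f * f') := by rw [hff]
              have hf : f = f * f' := cancL c _ _ h6
              exact cancL f f' 1 (by rw [mul_one, ← hf])
          have hem : LDvd e m := hm e (Finset.mem_coe.mpr
            (Finset.mem_filter.mpr ⟨(hfin d).mem_toFinset.mpr hed, heirr⟩))
          have heg : LDvd e g := hgmax e hed hem
          refine (hle' x u).mpr ?_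
          obtain ⟨k, hk⟩ := heg
          exact ⟨k, by show c * g = x.1 * k; rw [hex, hk, mul_assoc]⟩
        · -- a ≤ c
          have h5 : a ≤ (⟨c, hch⟩ : SubT M h) := le_of_eq heq.symm |>.trans inf_le_right
          rw [sup_eq_left.mpr h5]
          exact (hle' _ _).mpr ⟨g, rfl⟩
      have htle : (⟨h, ldvd_refl' h⟩ : SubT M h) ≤ u := by
        calc (⟨h, ldvd_refl' h⟩ : SubT M h) = s'.sup id := htop.symm
          _ ≤ s'.sup (fun a => (⟨c, hch⟩ : SubT M h) ⊔ a) :=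
              Finset.sup_mono_fun (fun a _ => le_sup_right)
          _ ≤ u := Finset.sup_le hkey
      obtain ⟨k, hk⟩ := (hle' _ _).mp htle
      exact ⟨k, cancL c g (d * k) (by rw [← mul_assoc, ← hc]; exact hk)⟩
end

section
/- Let M be a left divisibility monoid. If a and b are hypercubes then the right normal form of ab has length at most two: there exist hypercubes a', a'' with ab = a'·h(ab), h(ab) = a''b, and a = a'a'' (so a' is a hypercube as a left divisor of the hypercube a). -/
section AuxLemmas
variable {M : Type*} [Monoid M]

lemma LDvd_trans {a b c : M} (h1 : LDvd a b) (h2 : LDvd b c) : LDvd a c := by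
  obtain ⟨x, rfl⟩ := h1
  obtain ⟨y, rfl⟩ := h2
  exact ⟨x * y, by rw [mul_assoc]⟩

/-- In a left divisibility monoid, a left divisor of a hypercube is a hypercube. -/
lemma hypercube_of_ldvd (hM : IsLDM M) {h d : M}
    (hh : IsHypercube h) (hd : LDvd d h) : IsHypercube d := by
  classical
  obtain ⟨s, hirr, hub, hlub⟩ := hh
  obtain ⟨i, hle⟩ := hM.2.2.2.2.2 h
  letI := i
  letI : OrderBot {b : M // LDvd b h} :=
    { bot := ⟨1, h, (one_mul h).symm⟩
      bot_le := fun z => (hle _ _).mpr ⟨z.1, (one_mul _).symm⟩ }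
  set H : {b : M // LDvd b h} := ⟨h, 1, (mul_one h).symm⟩ with hH
  have hleH : ∀ z : {b : M // LDvd b h}, z ≤ H := fun z => (hle _ _).mpr z.2
  set f : {x // x ∈ s} → {b : M // LDvd b h} := fun x => ⟨x.1, hub x.1 x.2⟩ with hf
  have hsup : s.attach.sup f = H := by
    apply le_antisymm (Finset.sup_le fun x _ => hleH _)
    refine (hle _ _).mpr (hlub _ (fun x hx => ?_))
    exact (hle _ _).mp (Finset.le_sup (f := f) (Finset.mem_attach s ⟨x, hx⟩))
  set dd : {b : M // LDvd b h} := ⟨d, hd⟩ with hdd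
  have key : ∀ x : {x // x ∈ s}, dd ⊓ f x = ⊥ ∨ dd ⊓ f x = f x := by
    intro x
    obtain ⟨c, hc⟩ : LDvd (dd ⊓ f x).1 x.1 := (hle _ _).mp inf_le_right
    rcases (hirr x.1 x.2).2 _ _ hc with h2 | h2
    · exact Or.inl (Subtype.ext h2)
    · refine Or.inr (Subtype.ext ?_)
      rw [hc, h2, mul_one]
  have hd_eq : dd = s.attach.sup (fun x => dd ⊓ f x) := by
    conv_lhs => rw [← inf_eq_left.mpr (hleH dd), ← hsup]
    exact Finset.sup_inf_distrib_left _ _ _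
  refine ⟨s.filter (fun x => LDvd x d), fun x hx => hirr x (Finset.mem_filter.mp hx).1,
    fun x hx => (Finset.mem_filter.mp (Finset.mem_coe.mp hx)).2, ?_⟩
  intro m hm
  obtain ⟨g, hgd, hgm, hgmax⟩ := hM.2.2.2.1 d m
  have hgh : LDvd g h := LDvd_trans hgd hd
  have hdg : dd ≤ (⟨g, hgh⟩ : {b : M // LDvd b h}) := by
    rw [hd_eq]
    apply Finset.sup_le
    intro x _
    rcases key x with h1 | h1
    · rw [h1]; exact bot_le
    · rw [h1]
      have hxd : LDvd x.1 d := (hle _ _).mp (h1 ▸ inf_le_left)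
      have hxm : LDvd x.1 m := hm x.1 (Finset.mem_coe.mpr (Finset.mem_filter.mpr ⟨x.2, hxd⟩))
      exact (hle _ _).mpr (hgmax _ hxd hxm)
  exact LDvd_trans ((hle _ _).mp hdg) hgm

end AuxLemmas

/-- The right normal form of a product of two hypercubes has length at most two. -/
theorem stmt_10 {M : Type*} [Monoid M] (hM : IsLDM M)
    (hmap : M → M) (hspec : ∀ a : M, IsMaxHC a (hmap a))
    {a b : M} (ha : IsHypercube a) (hb : IsHypercube b) :
    ∃ a' a'' : M, IsHypercube a' ∧ IsHypercube a'' ∧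
      a * b = a' * hmap (a * b) ∧ hmap (a * b) = a'' * b ∧ a = a' * a'' := by
  obtain ⟨hhc, ⟨a', ha'⟩, hmax⟩ := hspec (a * b)
  obtain ⟨a'', ha''⟩ := hmax b hb ⟨a, rfl⟩
  have haa : a = a' * a'' := by
    apply hM.2.1 b
    rw [mul_assoc, ← ha'', ← ha']
  exact ⟨a', a'', hypercube_of_ldvd hM ha ⟨a'', haa⟩,
    hypercube_of_ldvd hM hhc ⟨b, ha''⟩, ha', ha'', haa⟩
end
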